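/- arXiv:2104.03429 — 5 statements merged into one kernel-verified Lean document; each statement's English description precedes it below -/
import Mathlib

section
/- Let α₁, α₂ be nonzero complex numbers. The system of equations w(w²−3y²)/(w²+y²)² = α₁ and y(3w²−y²)/(w²+y²)² = α₂ (in complex unknowns y, w with w²+y² ≠ 0) has a solution if and only if α₁² + α₂² ≠ 0. -/
open Complex

theorem stmt_0 (α₁ α₂ : ℂ) (h₁ : α₁ ≠ 0) (h₂ : α₂ ≠ 0) :
    (∃ y w : ℂ, w ^ 2 + y ^ 2 ≠ 0 ∧
      w * (w ^ 2 - 3 * y ^ 2) / (w ^ 2 + y ^ 2) ^ 2 = α₁ ∧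
      y * (3 * w ^ 2 - y ^ 2) / (w ^ 2 + y ^ 2) ^ 2 = α₂) ↔
    α₁ ^ 2 + α₂ ^ 2 ≠ 0 := by
  constructor
  · rintro ⟨y, w, hD, hA, hB⟩
    have key : α₁ ^ 2 + α₂ ^ 2 = (w ^ 2 + y ^ 2)⁻¹ := by
      rw [← hA, ← hB]
      field_simp
      ring
    rw [key]
    exact inv_ne_zero hD
  · intro hne
    obtain ⟨a, ha⟩ : ∃ a : ℂ, a = α₁ + I * α₂ := ⟨_, rfl⟩
    obtain ⟨b, hb⟩ : ∃ b : ℂ, b = α₁ - I * α₂ := ⟨_, rfl⟩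
    have hab : a * b = α₁ ^ 2 + α₂ ^ 2 := by
      rw [ha, hb]
      linear_combination (-(α₂ ^ 2) : ℂ) * I_sq
    have haz : a ≠ 0 := fun h => hne (by rw [← hab, h, zero_mul])
    have hbz : b ≠ 0 := fun h => hne (by rw [← hab, h, mul_zero])
    have habz : a ^ 2 * b ≠ 0 := mul_ne_zero (pow_ne_zero 2 haz) hbz
    obtain ⟨v, hv⟩ := IsAlgClosed.exists_pow_nat_eq (k := ℂ) (a ^ 2 * b)⁻¹
      (n := 3) (by norm_num)
    have hvz : v ≠ 0 := by
      intro h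
      rw [h, zero_pow (by norm_num), eq_comm, inv_eq_zero] at hv
      exact habz hv
    have hv3 : v ^ 3 * (a ^ 2 * b) = 1 := by
      rw [hv]; field_simp
    obtain ⟨u, hu⟩ : ∃ u : ℂ, u = a * v ^ 2 := ⟨_, rfl⟩
    have huz : u ≠ 0 := hu ▸ mul_ne_zero haz (pow_ne_zero 2 hvz)
    obtain ⟨w, hw⟩ : ∃ w : ℂ, w = (u + v) / 2 := ⟨_, rfl⟩
    obtain ⟨y, hy⟩ : ∃ y : ℂ, y = I * (v - u) / 2 := ⟨_, rfl⟩
    have hy2 : y ^ 2 = -((u - v) ^ 2) / 4 := by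
      rw [hy]
      linear_combination ((v - u) ^ 2 / 4 : ℂ) * I_sq
    have hD : w ^ 2 + y ^ 2 = u * v := by rw [hw, hy2]; ring
    have hN1 : w * (w ^ 2 - 3 * y ^ 2) = (u ^ 3 + v ^ 3) / 2 := by
      rw [hw, hy2]; ring
    have hN2 : y * (3 * w ^ 2 - y ^ 2) = I * (v ^ 3 - u ^ 3) / 2 := by
      rw [hy2, hy, hw]; ring
    have huv : u * v ≠ 0 := mul_ne_zero huz hvz
    have key1 : u ^ 3 + v ^ 3 = (a + b) * (u * v) ^ 2 := by
      rw [hu]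
      linear_combination (-(v ^ 3) : ℂ) * hv3
    have key2 : v ^ 3 - u ^ 3 = (b - a) * (u * v) ^ 2 := by
      rw [hu]
      linear_combination (-(v ^ 3) : ℂ) * hv3
    refine ⟨y, w, ?_, ?_, ?_⟩
    · rw [hD]; exact huv
    · rw [hN1, hD, key1]
      have hα : α₁ = (a + b) / 2 := by rw [ha, hb]; ring
      rw [hα]
      field_simp
    · rw [hN2, hD, key2]
      have hα : α₂ = I * (b - a) / 2 := by
        rw [ha, hb]
        linear_combination (α₂ : ℂ) * I_sq
      rw [hα]
      field_simp
end

section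
/- Let α₁, α₂ be nonzero complex numbers. The system of equations (w²+y²)³α₂²/(4(w²−3y²)²w²) = α₁ and (3w²−y²)y/(y²+w²) = 1 (in complex unknowns y, w with the denominators nonzero) has a solution if and only if 4α₁ − α₂² ≠ 0. -/
theorem stmt_3 (α₁ α₂ : ℂ) (h₁ : α₁ ≠ 0) (h₂ : α₂ ≠ 0) :
    (∃ y w : ℂ, w ≠ 0 ∧ w ^ 2 - 3 * y ^ 2 ≠ 0 ∧ w ^ 2 + y ^ 2 ≠ 0 ∧
      (w ^ 2 + y ^ 2) ^ 3 * α₂ ^ 2 / (4 * (w ^ 2 - 3 * y ^ 2) ^ 2 * w ^ 2) = α₁ ∧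
      (3 * w ^ 2 - y ^ 2) * y / (y ^ 2 + w ^ 2) = 1) ↔
    4 * α₁ - α₂ ^ 2 ≠ 0 := by
  constructor
  · rintro ⟨y, w, hw, h3, hs, e1, e2⟩
    have hd : (4 : ℂ) * (w ^ 2 - 3 * y ^ 2) ^ 2 * w ^ 2 ≠ 0 := by
      apply mul_ne_zero (mul_ne_zero (by norm_num) (pow_ne_zero _ h3)) (pow_ne_zero _ hw)
    have hs' : y ^ 2 + w ^ 2 ≠ 0 := by rw [add_comm]; exact hs
    rw [div_eq_iff hd] at e1
    rw [div_eq_one_iff_eq hs'] at e2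
    intro H
    apply hs
    have key : (w ^ 2 + y ^ 2) ^ 2 * α₂ ^ 2 = 0 := by
      linear_combination e1 + (w ^ 2 - 3 * y ^ 2) ^ 2 * w ^ 2 * H -
        α₂ ^ 2 * ((3 * w ^ 2 - y ^ 2) * y + (y ^ 2 + w ^ 2)) * e2
    have := mul_eq_zero.mp key
    rcases this with h | h
    · exact pow_eq_zero_iff (by norm_num) |>.mp h
    · exact absurd (pow_eq_zero_iff (by norm_num) |>.mp h) h₂
  · intro hne
    obtain ⟨c, hc⟩ := IsAlgClosed.exists_pow_nat_eq (α₂ ^ 2 / (4 * α₁ - α₂ ^ 2)) (n := 2) (by norm_num)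
    have hc' : c ^ 2 * (4 * α₁ - α₂ ^ 2) = α₂ ^ 2 := by
      rw [hc]; field_simp
    have hc0 : c ≠ 0 := by
      intro h; apply h₂
      have : α₂ ^ 2 = 0 := by rw [← hc']; simp [h]
      exact pow_eq_zero_iff (by norm_num) |>.mp this
    set s : ℂ := 1 + c ^ 2 with hs_def
    have hs0 : s ≠ 0 := by
      intro h
      apply h₁
      have h4 : (4 : ℂ) * α₁ = 0 := by linear_combination (4 * α₁ - α₂ ^ 2) * h - hc'
      have := mul_eq_zero.mp h4
      rcases this with h | h
      · norm_num at h
      · exact h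
    -- cubic root
    have hcube : ∃ y : ℂ, 4 * y ^ 3 - 3 * s * y + s = 0 := by
      set p : Polynomial ℂ := Polynomial.C 4 * Polynomial.X ^ 3 - Polynomial.C (3 * s) * Polynomial.X + Polynomial.C s with hp
      have hdeg : p.degree = 3 := by
        rw [hp]; compute_degree!
      obtain ⟨y, hy⟩ := IsAlgClosed.exists_root p (by rw [hdeg]; norm_num)
      refine ⟨y, ?_⟩
      have := hy
      simp only [Polynomial.IsRoot, hp, Polynomial.eval_add, Polynomial.eval_sub,
        Polynomial.eval_mul, Polynomial.eval_C, Polynomial.eval_pow, Polynomial.eval_X] at this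
      linear_combination this
    obtain ⟨y, hy⟩ := hcube
    obtain ⟨w, hw2⟩ := IsAlgClosed.exists_pow_nat_eq (s - y ^ 2) (n := 2) (by norm_num)
    have hsum : w ^ 2 + y ^ 2 = s := by linear_combination hw2
    have hA : (w ^ 2 - 3 * y ^ 2) ^ 2 * w ^ 2 = s ^ 2 * c ^ 2 := by
      rw [hw2]
      linear_combination ((3 * s - 4 * y ^ 2) * y + s) * hy + s ^ 2 * hs_def
    have hA0 : (w ^ 2 - 3 * y ^ 2) ^ 2 * w ^ 2 ≠ 0 := by
      rw [hA]
      exact mul_ne_zero (pow_ne_zero _ hs0) (pow_ne_zero _ hc0)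
    have hw0 : w ≠ 0 := by
      intro h; apply hA0; simp [h]
    have h30 : w ^ 2 - 3 * y ^ 2 ≠ 0 := by
      intro h; apply hA0; simp [h]
    refine ⟨y, w, hw0, h30, by rw [hsum]; exact hs0, ?_, ?_⟩
    · rw [div_eq_iff (mul_ne_zero (mul_ne_zero (by norm_num) (pow_ne_zero _ h30)) (pow_ne_zero _ hw0))]
      linear_combination α₂ ^ 2 * ((w ^ 2 + y ^ 2) ^ 2 + (w ^ 2 + y ^ 2) * s + s ^ 2) * hsum -
        4 * α₁ * hA - s ^ 2 * hc' + α₂ ^ 2 * s ^ 2 * hs_def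
    · rw [div_eq_one_iff_eq (by rw [add_comm, hsum]; exact hs0)]
      linear_combination -hy + ((3 : ℂ) * y) * hw2 - hsum
end

section
/- Let 𝔑₁ᶜ be the 3-dimensional complex algebra with basis e₁, e₂, e₃ and the only nonzero product e₁e₁ = e₂ (it is a Zinbiel algebra). Then every automorphism of 𝔑₁ᶜ has matrix of the form [[x, 0, 0], [z, x², t], [u, 0, y]] with respect to (e₁,e₂,e₃), where x, y are nonzero, and conversely every such invertible matrix defines an automorphism. -/
/-- Standard basis vectors of `Fin 3 → ℂ`. -/
noncomputable def e (i : Fin 3) : Fin 3 → ℂ := Pi.single i 1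

/-- Multiplication of the Zinbiel algebra `𝔑₁ᶜ`: the only nonzero product is `e₁e₁ = e₂`. -/
def mulN1C (a b : Fin 3 → ℂ) : Fin 3 → ℂ := fun k => if k = 1 then a 0 * b 0 else 0

lemma decomp (v : Fin 3 → ℂ) : v = v 0 • e 0 + v 1 • e 1 + v 2 • e 2 := by
  funext k; fin_cases k <;> simp [e, Pi.single_apply]

lemma mul_eq (a b : Fin 3 → ℂ) : mulN1C a b = (a 0 * b 0) • e 1 := by
  funext k; fin_cases k <;> simp [mulN1C, e, Pi.single_apply]

theorem stmt_9 (φ : (Fin 3 → ℂ) ≃ₗ[ℂ] (Fin 3 → ℂ)) :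
    (∀ a b : Fin 3 → ℂ, φ (mulN1C a b) = mulN1C (φ a) (φ b)) ↔
    ∃ x y z t u : ℂ, x ≠ 0 ∧ y ≠ 0 ∧
      φ (e 0) = x • e 0 + z • e 1 + u • e 2 ∧
      φ (e 1) = (x ^ 2) • e 1 ∧
      φ (e 2) = t • e 1 + y • e 2 := by
  constructor
  · intro h
    set x := φ (e 0) 0 with hxdef
    set z := φ (e 0) 1
    set u := φ (e 0) 2
    set t := φ (e 2) 1
    set y := φ (e 2) 2
    have he1 : mulN1C (e 0) (e 0) = e 1 := by
      rw [mul_eq]; simp [e, Pi.single_apply]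
    have hphi1 : φ (e 1) = (x ^ 2) • e 1 := by
      have := h (e 0) (e 0)
      rw [he1, mul_eq] at this
      rw [this]; ring_nf; rfl
    have hx : x ≠ 0 := by
      intro hx0
      have : φ (e 1) = 0 := by rw [hphi1, hx0]; simp
      have h2 : (e 1 : Fin 3 → ℂ) = 0 := by
        have := φ.injective (this.trans (map_zero φ).symm)
        exact this
      have := congrFun h2 1
      simp [e, Pi.single_apply] at this
    have h20 : φ (e 2) 0 = 0 := by
      have h0 : mulN1C (e 2) (e 0) = 0 := by
        rw [mul_eq]; simp [e, Pi.single_apply]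
      have := h (e 2) (e 0)
      rw [h0, map_zero, mul_eq] at this
      have := congrFun this 1
      simp [e, Pi.single_apply] at this
      rcases this with h' | h'
      · exact h'
      · exact absurd h' hx
    have hphi2 : φ (e 2) = t • e 1 + y • e 2 := by
      conv_lhs => rw [decomp (φ (e 2))]
      rw [h20]; simp; rfl
    have hy : y ≠ 0 := by
      intro hy0
      have : φ ((t * (x ^ 2)⁻¹) • e 1) = φ (e 2) := by
        rw [map_smul, hphi1, hphi2, hy0, smul_smul]
        field_simp
        rw [zero_smul, add_zero]
      have h2 := φ.injective this
      have := congrFun h2 2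
      simp [e, Pi.single_apply] at this
    exact ⟨x, y, z, t, u, hx, hy, decomp (φ (e 0)), hphi1, hphi2⟩
  · rintro ⟨x, y, z, t, u, hx, hy, h0, h1, h2⟩
    have key : ∀ v : Fin 3 → ℂ, φ v 0 = v 0 * x := by
      intro v
      have hv := congrArg φ (decomp v)
      rw [map_add, map_add, map_smul, map_smul, map_smul, h0, h1, h2] at hv
      have := congrFun hv 0
      simpa [e, Pi.single_apply, mul_comm] using this
    intro a b
    rw [mul_eq, mul_eq, map_smul, h1, key, key, smul_smul]
    congr 1
    ring
end

section
/- Every 2-dimensional nonzero Zinbiel algebra over ℂ with nonzero product is isomorphic to the algebra with basis e₁, e₂ and multiplication e₁e₁ = e₂ (all other products zero). Equivalently: any 2-dimensional complex Zinbiel algebra with a nonzero product has a basis in which the only nonzero product of basis elements is e₁² = e₂. -/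
/-!
If every square vanishes, the product is alternating and the Zinbiel identity kills all products
`(xy)z`; in dimension two the nonzero value `p = xy` would then annihilate a whole basis `p, w`,
so some `x` has `n = x² ≠ 0`. The identity at `(x, x, x)` gives `nx = 2xn`, from which `x, n` are
independent, hence a basis. Writing `xn = γx + δn`, the identity at `(x, n, x)` becomes
`δγ x + (δ² + 2γ) n = 0`, forcing `γ = δ = 0`; then `nx = 0` and `nn = x(xn + nx) = 0`.
-/

open Module

section

variable {K A : Type*} [Field K] [AddCommGroup A] [Module K A]

theorem exists_smul_add_smul_eq_of_finrank_eq_two (hdim : finrank K A = 2) {x y : A}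
    (hxy : LinearIndependent K ![x, y]) (z : A) : ∃ a b : K, a • x + b • y = z := by
  have hspan := hxy.span_eq_top_of_card_eq_finrank (by simp [hdim])
  rw [Matrix.range_cons_cons_empty] at hspan
  exact Submodule.mem_span_pair.mp (hspan ▸ Submodule.mem_top)

theorem LinearMap.eq_zero_of_isAlt_of_finrank_eq_two (hdim : finrank K A = 2)
    {mul : A →ₗ[K] A →ₗ[K] A} (halt : mul.IsAlt) (hmul : ∀ x y z, mul (mul x y) z = 0) :
    mul = 0 := by
  by_contra hne
  obtain ⟨x, y, hxy⟩ : ∃ x y, mul x y ≠ 0 := by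
    by_contra! h
    exact hne (LinearMap.ext₂ h)
  obtain ⟨w, hw⟩ := exists_linearIndependent_pair_of_one_lt_finrank (R := K) (by omega) hxy
  let b := basisOfLinearIndependentOfCardEqFinrank hw (by simp [hdim])
  have hb : ⇑b = ![mul x y, w] := coe_basisOfLinearIndependentOfCardEqFinrank ..
  refine hne (LinearMap.ext_basis b b ?_)
  simp only [Fin.forall_fin_two, hb, Matrix.cons_val_zero, Matrix.cons_val_one,
    LinearMap.zero_apply]
  -- `b 0 = mul x y` is itself a product, so it annihilates on both sides.
  exact ⟨⟨halt _, hmul x y w⟩, by rw [← halt.neg, hmul, neg_zero], halt w⟩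

def IsZinbiel (mul : A →ₗ[K] A →ₗ[K] A) : Prop :=
  ∀ x y z, mul (mul x y) z = mul x (mul y z + mul z y)

namespace IsZinbiel

variable {mul : A →ₗ[K] A →ₗ[K] A} (hZ : IsZinbiel mul)
include hZ

theorem mul_mul_eq_zero_of_isAlt (halt : mul.IsAlt) (x y z : A) : mul (mul x y) z = 0 := by
  rw [hZ, ← halt.neg z y, neg_add_cancel, map_zero]

theorem exists_mul_self_ne_zero (hdim : finrank K A = 2) (hne : mul ≠ 0) : ∃ x, mul x x ≠ 0 := by
  by_contra! halt
  exact hne (LinearMap.eq_zero_of_isAlt_of_finrank_eq_two hdim halt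
    (hZ.mul_mul_eq_zero_of_isAlt halt))

theorem mul_self_mul_self (x : A) : mul (mul x x) x = (2 : K) • mul x (mul x x) := by
  rw [hZ, map_add, two_smul]

theorem linearIndependent_self_mul_self {x : A} (hx : mul x x ≠ 0) :
    LinearIndependent K ![x, mul x x] := by
  rw [LinearIndependent.pair_iff]
  intro s t hst
  have hleft : s • mul x x + t • mul x (mul x x) = 0 := by
    simpa using congrArg (mul x) hst
  have hright : s • mul x x + (2 * t) • mul x (mul x x) = 0 := by
    simpa [hZ.mul_self_mul_self, smul_smul, mul_comm] using congrArg (mul · x) hst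
  have ht : t • mul x (mul x x) = 0 := by
    linear_combination (norm := module) hright - hleft
  have hs : s = 0 := by
    rw [ht, add_zero, smul_eq_zero] at hleft
    exact hleft.resolve_right hx
  subst hs
  rw [zero_smul, zero_add, smul_eq_zero] at hst
  exact ⟨rfl, hst.resolve_right hx⟩

theorem mul_mul_self_eq_zero [NeZero (2 : K)] (hdim : finrank K A = 2) {x : A}
    (hx : mul x x ≠ 0) : mul x (mul x x) = 0 := by
  have hli := hZ.linearIndependent_self_mul_self hx
  obtain ⟨γ, δ, hγδ⟩ := exists_smul_add_smul_eq_of_finrank_eq_two hdim hli (mul x (mul x x))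
  have h := hZ x (mul x x) x
  rw [hZ.mul_self_mul_self, ← hγδ] at h
  simp only [map_add, map_smul, LinearMap.add_apply, LinearMap.smul_apply] at h
  rw [hZ.mul_self_mul_self, ← hγδ] at h
  have hrel : (δ * γ) • x + (δ * δ + 2 * γ) • mul x x = 0 := by
    linear_combination (norm := module) -h
  obtain ⟨h1, h2⟩ := LinearIndependent.pair_iff.mp hli _ _ hrel
  have hγ : γ = 0 := by
    rcases mul_eq_zero.mp h1 with hδ | hγ
    · simpa [hδ, two_ne_zero] using h2
    · exact hγ
  have hδ : δ = 0 := by simpa [hγ] using h2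
  rw [← hγδ, hγ, hδ, zero_smul, zero_smul, add_zero]

end IsZinbiel

end

theorem stmt_17 (A : Type*) [AddCommGroup A] [Module ℂ A]
    (mul : A →ₗ[ℂ] A →ₗ[ℂ] A)
    (hZ : ∀ x y z : A, mul (mul x y) z = mul x (mul y z + mul z y))
    (hdim : Module.finrank ℂ A = 2)
    (hne : ∃ x y : A, mul x y ≠ 0) :
    ∃ b : Module.Basis (Fin 2) ℂ A,
      mul (b 0) (b 0) = b 1 ∧ mul (b 0) (b 1) = 0 ∧
      mul (b 1) (b 0) = 0 ∧ mul (b 1) (b 1) = 0 := by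
  have hZ : IsZinbiel mul := hZ
  have hmul : mul ≠ 0 := by
    rintro rfl
    obtain ⟨x, y, hxy⟩ := hne
    exact hxy rfl
  obtain ⟨x, hx⟩ := hZ.exists_mul_self_ne_zero hdim hmul
  have hxn : mul x (mul x x) = 0 := hZ.mul_mul_self_eq_zero hdim hx
  have hnx : mul (mul x x) x = 0 := by rw [hZ.mul_self_mul_self, hxn, smul_zero]
  have hnn : mul (mul x x) (mul x x) = 0 := by rw [hZ, hxn, hnx, add_zero, map_zero]
  let b := basisOfLinearIndependentOfCardEqFinrank (hZ.linearIndependent_self_mul_self hx)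
    (by simp [hdim])
  have hb : ⇑b = ![x, mul x x] := coe_basisOfLinearIndependentOfCardEqFinrank ..
  refine ⟨b, ?_⟩
  simp only [hb, Matrix.cons_val_zero, Matrix.cons_val_one, hxn, hnx, hnn, and_self]
end

section
/- Over ℂ, the matrix φ with rows (x, y, 0), (z, w, 0), (t, p, xw−yz), applied to the symmetric-part data of a cocycle on 𝔑₁, transforms the coefficient α₄ of Δ₁₃ and α₅ of Δ₂₃ by α₄* = (α₄x + α₅z)(xw − yz) and α₅* = (α₄y + α₅w)(xw − yz). In particular, the condition (α₄, α₅) ≠ (0,0) is invariant under all automorphisms of 𝔑₁ (i.e., (α₄*, α₅*) ≠ (0,0) whenever (α₄, α₅) ≠ (0,0) and xw − yz ≠ 0). -/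
theorem stmt_19 (x y z w t p α₁ α₂ α₃ α₄ α₅ : ℂ)
    (φ : (Fin 3 → ℂ) →ₗ[ℂ] (Fin 3 → ℂ))
    (hφ1 : φ (e 0) = x • e 0 + z • e 1 + t • e 2)
    (hφ2 : φ (e 1) = y • e 0 + w • e 1 + p • e 2)
    (hφ3 : φ (e 2) = (x * w - y * z) • e 2)
    (θ : (Fin 3 → ℂ) → (Fin 3 → ℂ) → ℂ)
    (hθ : ∀ a b : Fin 3 → ℂ,
      θ a b = α₁ * (a 0 * b 0) + α₂ * (a 0 * b 1) + α₃ * (a 1 * b 1)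
        + α₄ * (a 0 * b 2) + α₅ * (a 1 * b 2))
    (hdet : x * w - y * z ≠ 0) :
    θ (φ (e 0)) (φ (e 2)) = (α₄ * x + α₅ * z) * (x * w - y * z) ∧
    θ (φ (e 1)) (φ (e 2)) = (α₄ * y + α₅ * w) * (x * w - y * z) ∧
    ((α₄, α₅) ≠ (0, 0) →
      ((α₄ * x + α₅ * z) * (x * w - y * z), (α₄ * y + α₅ * w) * (x * w - y * z)) ≠ (0, 0)) := by
  have he : ∀ i j : Fin 3, e i j = if i = j then 1 else 0 := by
    intro i j
    simp [e, Pi.single_apply, eq_comm]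
  refine ⟨?_, ?_, ?_⟩
  · rw [hφ1, hφ3, hθ]
    simp [he]
    ring
  · rw [hφ2, hφ3, hθ]
    simp [he]
    ring
  · intro h hc
    rw [Prod.ext_iff] at hc
    obtain ⟨h1, h2⟩ := hc
    have h1' : α₄ * x + α₅ * z = 0 := by
      rcases mul_eq_zero.1 h1 with h | h
      · exact h
      · exact absurd h hdet
    have h2' : α₄ * y + α₅ * w = 0 := by
      rcases mul_eq_zero.1 h2 with h | h
      · exact h
      · exact absurd h hdet
    apply h
    have h4 : α₄ * (x * w - y * z) = 0 := by
      have := congrArg (· * w) h1'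
      have := congrArg (· * z) h2'
      simp only at *
      linear_combination w * h1' - z * h2'
    have h5 : α₅ * (x * w - y * z) = 0 := by
      linear_combination x * h2' - y * h1'
    have h4' : α₄ = 0 := by
      rcases mul_eq_zero.1 h4 with h | h
      · exact h
      · exact absurd h hdet
    have h5' : α₅ = 0 := by
      rcases mul_eq_zero.1 h5 with h | h
      · exact h
      · exact absurd h hdet
    simp [h4', h5']
end
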